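/- arXiv:1608.06785 — 2 statements merged into one kernel-verified Lean document; each statement's English description precedes it below -/
import Mathlib

section
/- Let D ⊆ ℝ be an open interval, let A : D → (0,∞) be twice continuously differentiable, let ψ : D → ℝ be twice continuously differentiable, and define (L*f)(y) = A(y)f''(y) + A'(y)f'(y) − ψ'(y)A(y)f'(y), Γ₁(h) = A·(h')², and Γ₂(h) = ½(L*(Γ₁(h)) − 2·A·h'·(L*h)'). Then for every four times continuously differentiable h : D → ℝ and every y ∈ D: Γ₂(h)(y) = ( A'(y)²/(4A(y)) − A''(y)/2 + A(y)ψ''(y) + ψ'(y)A'(y)/2 )·A(y)h'(y)² + ( A(y)h''(y) + ½A'(y)h'(y) )². -/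
/-!
The identity is a direct computation. Expanding `L*(Γ₁ h)` and `(L* h)'` by the product rule,
the third-derivative terms `2 A² h' h'''` cancel in `Γ₂(h)`, leaving a quadratic polynomial in
`h''` whose completion of the square (hence the division by `A`) is the stated formula.
-/

open Filter Topology

section

variable {A ψ f : ℝ → ℝ} {y : ℝ}

noncomputable def diffusionGenerator (A ψ f : ℝ → ℝ) (y : ℝ) : ℝ :=
  A y * deriv (deriv f) y + deriv A y * deriv f y - deriv ψ y * A y * deriv f y

noncomputable def carreDuChamp (A f : ℝ → ℝ) (y : ℝ) : ℝ := A y * deriv f y ^ 2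

lemma hasDerivAt_deriv_of_contDiffAt (hf : ContDiffAt ℝ 2 f y) :
    HasDerivAt (deriv f) (deriv (deriv f) y) y :=
  ((hf.derivWithin (m := 1) (by norm_num)).differentiableAt one_ne_zero).hasDerivAt

lemma hasDerivAt_carreDuChamp (hA : DifferentiableAt ℝ A y)
    (hf : DifferentiableAt ℝ (deriv f) y) :
    HasDerivAt (carreDuChamp A f)
      (deriv A y * deriv f y ^ 2 + 2 * A y * deriv f y * deriv (deriv f) y) y :=
  (hA.hasDerivAt.mul (hf.hasDerivAt.pow 2)).congr_deriv (by simp only [Pi.pow_apply]; ring)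

lemma deriv_deriv_carreDuChamp (hA : ContDiffAt ℝ 2 A y) (hf : ContDiffAt ℝ 2 (deriv f) y) :
    deriv (deriv (carreDuChamp A f)) y
      = deriv (deriv A) y * deriv f y ^ 2 + 4 * deriv A y * deriv f y * deriv (deriv f) y
        + 2 * A y * (deriv (deriv f) y ^ 2 + deriv f y * deriv (deriv (deriv f)) y) := by
  have hderiv : deriv (carreDuChamp A f) =ᶠ[𝓝 y] fun w =>
      deriv A w * deriv f w ^ 2 + 2 * A w * deriv f w * deriv (deriv f) w := by
    filter_upwards [hA.eventually (by simp), hf.eventually (by simp)] with w hAw hfw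
    exact (hasDerivAt_carreDuChamp (hAw.differentiableAt two_ne_zero)
      (hfw.differentiableAt two_ne_zero)).deriv
  have dA := (hA.differentiableAt two_ne_zero).hasDerivAt
  have df := (hf.differentiableAt two_ne_zero).hasDerivAt
  rw [hderiv.deriv_eq]
  exact (((hasDerivAt_deriv_of_contDiffAt hA).mul (df.pow 2)).add
    (((dA.const_mul 2).mul df).mul (hasDerivAt_deriv_of_contDiffAt hf))).deriv.trans
      (by simp only [Pi.pow_apply, Pi.mul_apply]; ring)

lemma diffusionGenerator_carreDuChamp (hA : ContDiffAt ℝ 2 A y)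
    (hf : ContDiffAt ℝ 2 (deriv f) y) :
    diffusionGenerator A ψ (carreDuChamp A f) y
      = A y * (deriv (deriv A) y * deriv f y ^ 2
          + 4 * deriv A y * deriv f y * deriv (deriv f) y
          + 2 * A y * (deriv (deriv f) y ^ 2 + deriv f y * deriv (deriv (deriv f)) y))
        + (deriv A y - deriv ψ y * A y)
          * (deriv A y * deriv f y ^ 2 + 2 * A y * deriv f y * deriv (deriv f) y) := by
  rw [diffusionGenerator, deriv_deriv_carreDuChamp hA hf,
    (hasDerivAt_carreDuChamp (hA.differentiableAt two_ne_zero)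
      (hf.differentiableAt two_ne_zero)).deriv]
  ring

lemma deriv_diffusionGenerator (hA : ContDiffAt ℝ 2 A y) (hψ : ContDiffAt ℝ 2 ψ y)
    (hf : ContDiffAt ℝ 2 (deriv f) y) :
    deriv (diffusionGenerator A ψ f) y
      = A y * deriv (deriv (deriv f)) y
        + (2 * deriv A y - deriv ψ y * A y) * deriv (deriv f) y
        + (deriv (deriv A) y - deriv (deriv ψ) y * A y - deriv ψ y * deriv A y)
          * deriv f y := by
  have dA := (hA.differentiableAt two_ne_zero).hasDerivAt
  have dA' := hasDerivAt_deriv_of_contDiffAt hA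
  have dψ' := hasDerivAt_deriv_of_contDiffAt hψ
  have df' := (hf.differentiableAt two_ne_zero).hasDerivAt
  have df'' := hasDerivAt_deriv_of_contDiffAt hf
  exact (((dA.mul df'').add (dA'.mul df')).sub ((dψ'.mul dA).mul df')).deriv.trans
    (by simp only [Pi.mul_apply]; ring)

end

theorem stmt3_general (D : Set ℝ) (hD_open : IsOpen D)
    (A ψ h : ℝ → ℝ)
    (hA_pos : ∀ y ∈ D, 0 < A y)
    (hA : ContDiffOn ℝ 2 A D) (hψ : ContDiffOn ℝ 2 ψ D)
    (hh : ContDiffOn ℝ 4 h D)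
    (Lstar : (ℝ → ℝ) → ℝ → ℝ)
    (hL : ∀ u : ℝ → ℝ, ∀ y : ℝ, Lstar u y
      = A y * deriv (deriv u) y + deriv A y * deriv u y - deriv ψ y * A y * deriv u y)
    (Γ₁ Γ₂ : (ℝ → ℝ) → ℝ → ℝ)
    (hΓ₁ : ∀ u : ℝ → ℝ, ∀ y : ℝ, Γ₁ u y = A y * (deriv u y)^2)
    (hΓ₂ : ∀ u : ℝ → ℝ, ∀ y : ℝ, Γ₂ u y
      = (1/2) * (Lstar (Γ₁ u) y - 2 * A y * deriv u y * deriv (Lstar u) y)) :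
    ∀ y ∈ D,
      Γ₂ h y
        = ((deriv A y)^2 / (4 * A y) - deriv (deriv A) y / 2
            + A y * deriv (deriv ψ) y + deriv ψ y * deriv A y / 2) * (A y * (deriv h y)^2)
          + (A y * deriv (deriv h) y + (1/2) * deriv A y * deriv h y)^2 := by
  intro y hy
  obtain rfl : Lstar = diffusionGenerator A ψ := funext fun u => funext (hL u)
  obtain rfl : Γ₁ = carreDuChamp A := funext fun u => funext (hΓ₁ u)
  have hAy := hA.contDiffAt (hD_open.mem_nhds hy)
  have hψy := hψ.contDiffAt (hD_open.mem_nhds hy)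
  have hhy := (hh.contDiffAt (hD_open.mem_nhds hy)).derivWithin (m := 2) (by norm_num)
  have hAy_ne : A y ≠ 0 := (hA_pos y hy).ne'
  rw [hΓ₂, diffusionGenerator_carreDuChamp hAy hhy, deriv_diffusionGenerator hAy hψy hhy]
  field_simp
  ring

/-- **Explicit formula for the iterated carré du champ operator `Γ₂`.** For
`(L*f)(y) = A(y)f''(y) + A'(y)f'(y) − ψ'(y)A(y)f'(y)`, `Γ₁(h) = A (h')²` and
`Γ₂(h) = ½(L*(Γ₁(h)) − 2 A h' (L*h)')`, one has, for `C⁴` functions `h`,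
`Γ₂(h) = (A'²/(4A) − A''/2 + Aψ'' + ψ'A'/2)·A(h')² + (Ah'' + ½A'h')²` on `D`. -/
theorem stmt3 (D : Set ℝ) (hD_open : IsOpen D) (hD_conn : D.OrdConnected)
    (A ψ h : ℝ → ℝ)
    (hA_pos : ∀ y ∈ D, 0 < A y)
    (hA : ContDiffOn ℝ 2 A D) (hψ : ContDiffOn ℝ 2 ψ D)
    (hh : ContDiffOn ℝ 4 h D)
    (Lstar : (ℝ → ℝ) → ℝ → ℝ)
    (hL : ∀ u : ℝ → ℝ, ∀ y : ℝ, Lstar u y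
      = A y * deriv (deriv u) y + deriv A y * deriv u y - deriv ψ y * A y * deriv u y)
    (Γ₁ Γ₂ : (ℝ → ℝ) → ℝ → ℝ)
    (hΓ₁ : ∀ u : ℝ → ℝ, ∀ y : ℝ, Γ₁ u y = A y * (deriv u y)^2)
    (hΓ₂ : ∀ u : ℝ → ℝ, ∀ y : ℝ, Γ₂ u y
      = (1/2) * (Lstar (Γ₁ u) y - 2 * A y * deriv u y * deriv (Lstar u) y)) :
    ∀ y ∈ D,
      Γ₂ h y
        = ((deriv A y)^2 / (4 * A y) - deriv (deriv A) y / 2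
            + A y * deriv (deriv ψ) y + deriv ψ y * deriv A y / 2) * (A y * (deriv h y)^2)
          + (A y * deriv (deriv h) y + (1/2) * deriv A y * deriv h y)^2 :=
  stmt3_general D hD_open A ψ h hA_pos hA hψ hh Lstar hL Γ₁ Γ₂ hΓ₁ hΓ₂
end

section
/- Let −∞ ≤ d₋ < d₊ ≤ ∞, D = (d₋,d₊), let A : D → (0,∞) be continuously differentiable, let ψ : D → ℝ be continuously differentiable with Z := ∫_D e^{−ψ(y)}dy ∈ (0,∞), and let h : D → (0,∞) be twice continuously differentiable. Define (L*h)(y) = A(y)h''(y) + A'(y)h'(y) − ψ'(y)A(y)h'(y) and μ_∞(dy) = (e^{−ψ(y)}/Z)dy. Assume that (i) the limits of (log h(y) + 1)·A(y)h'(y)e^{−ψ(y)} as y tends to each endpoint d₋ and d₊ are zero, and (ii) the functions y ↦ (log h(y)+1)(L*h)(y)e^{−ψ(y)} and y ↦ A(y)h'(y)²/h(y)·e^{−ψ(y)} are Lebesgue integrable on D. Then ∫_D (log h(y) + 1)·(L*h)(y) μ_∞(dy) = − ∫_D A(y)h'(y)²/h(y) μ_∞(dy). -/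
/-!
Since `(A h' e^{-ψ})' = (L*h) e^{-ψ}` and `(log h + 1)' = h'/h`, the product rule gives
`((log h + 1) A h' e^{-ψ})' = (log h + 1) (L*h) e^{-ψ} + A h'²/h e^{-ψ}`. Integrating over `D`,
the left side contributes only the boundary values, which vanish; dividing by `Z` gives the
identity. The improper integral over `D` is handled by exhausting `D` with the intervals `(a, b]`,
`a → d₋`, `b → d₊`, on which the fundamental theorem of calculus applies.
-/

open MeasureTheory Filter Set Topology

theorem integral_eq_sub_of_hasDerivAt_of_tendsto_of_ordConnected {D : Set ℝ}
    (hD : D.OrdConnected) (hDm : MeasurableSet D) {la lb : Filter ℝ} [la.NeBot] [lb.NeBot]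
    [la.IsCountablyGenerated] [lb.IsCountablyGenerated] (hlaD : la ≤ 𝓟 D) (hlbD : lb ≤ 𝓟 D)
    (hla : ∀ x ∈ D, ∀ᶠ a in la, a < x) (hlb : ∀ x ∈ D, ∀ᶠ b in lb, x < b)
    {g F : ℝ → ℝ} {ga gb : ℝ} (hderiv : ∀ x ∈ D, HasDerivAt g (F x) x) (hint : IntegrableOn F D)
    (hga : Tendsto g la (𝓝 ga)) (hgb : Tendsto g lb (𝓝 gb)) :
    ∫ x in D, F x = gb - ga := by
  have hcover : AECover (volume.restrict D) (la ×ˢ lb) (fun p => Ioc p.1 p.2) :=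
    ⟨(ae_restrict_of_forall_mem hDm) fun x hx =>
      ((hla x hx).prod_mk (hlb x hx)).mono fun _ hp => ⟨hp.1, hp.2.le⟩,
      fun _ => measurableSet_Ioc⟩
  obtain ⟨c, hc⟩ : D.Nonempty := (tendsto_principal.1 hlaD).exists
  have hftc : ∀ᶠ p in la ×ˢ lb, ∫ x in Ioc p.1 p.2, F x ∂(volume.restrict D) = g p.2 - g p.1 := by
    filter_upwards [((hla c hc).and (tendsto_principal.1 hlaD)).prod_mk
      ((hlb c hc).and (tendsto_principal.1 hlbD))] with ⟨a, b⟩ ⟨⟨hac, ha⟩, hcb, hb⟩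
    have hab : a ≤ b := (hac.trans hcb).le
    have hsub : Icc a b ⊆ D := hD.out ha hb
    rw [Measure.restrict_restrict measurableSet_Ioc,
      inter_eq_self_of_subset_left (Ioc_subset_Icc_self.trans hsub),
      ← intervalIntegral.integral_of_le hab]
    exact intervalIntegral.integral_eq_sub_of_hasDerivAt
      (fun x hx => hderiv x (hsub (by rwa [uIcc_of_le hab] at hx)))
      ((intervalIntegrable_iff_integrableOn_Ioc_of_le hab).2
        (hint.mono_set (Ioc_subset_Icc_self.trans hsub)))
  exact hcover.integral_eq_of_tendsto _ hint <|
    ((hgb.comp tendsto_snd).sub (hga.comp tendsto_fst)).congr' (hftc.mono fun _ h => h.symm)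

namespace EReal

variable {dm dp : EReal}

theorem Ioo_subset_image_preimage_coe :
    Ioo dm dp ⊆ ((↑) : ℝ → EReal) '' ((↑) ⁻¹' Ioo dm dp) := by
  rw [image_preimage_eq_inter_range, range_coe_eq_Ioo]
  exact fun e he => ⟨he, Ioo_subset_Ioo bot_le le_top he⟩

theorem comap_coe_nhds_left_inf_principal_neBot (h : dm < dp) :
    (comap ((↑) : ℝ → EReal) (𝓝 dm) ⊓ 𝓟 ((↑) ⁻¹' Ioo dm dp)).NeBot :=
  (comap_inf_principal_neBot_of_image_mem (left_nhdsWithin_Ioo_neBot h)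
    (mem_of_superset self_mem_nhdsWithin Ioo_subset_image_preimage_coe)).mono
    (inf_le_inf_right _ (comap_mono nhdsWithin_le_nhds))

theorem comap_coe_nhds_right_inf_principal_neBot (h : dm < dp) :
    (comap ((↑) : ℝ → EReal) (𝓝 dp) ⊓ 𝓟 ((↑) ⁻¹' Ioo dm dp)).NeBot :=
  (comap_inf_principal_neBot_of_image_mem (right_nhdsWithin_Ioo_neBot h)
    (mem_of_superset self_mem_nhdsWithin Ioo_subset_image_preimage_coe)).mono
    (inf_le_inf_right _ (comap_mono nhdsWithin_le_nhds))

theorem eventually_comap_coe_nhds_lt {x : ℝ} (hx : dm < x) :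
    ∀ᶠ a in comap ((↑) : ℝ → EReal) (𝓝 dm), a < x :=
  (eventually_lt_nhds hx).comap _ |>.mono fun _ => EReal.coe_lt_coe_iff.1

theorem eventually_comap_coe_nhds_gt {x : ℝ} (hx : x < dp) :
    ∀ᶠ b in comap ((↑) : ℝ → EReal) (𝓝 dp), x < b :=
  (eventually_gt_nhds hx).comap _ |>.mono fun _ => EReal.coe_lt_coe_iff.1

theorem integral_preimage_Ioo_eq_sub_of_hasDerivAt_of_tendsto (h : dm < dp)
    {g F : ℝ → ℝ} {ga gb : ℝ} (hderiv : ∀ x ∈ (↑) ⁻¹' Ioo dm dp, HasDerivAt g (F x) x)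
    (hint : IntegrableOn F ((↑) ⁻¹' Ioo dm dp))
    (hga : Tendsto g (comap (↑) (𝓝 dm) ⊓ 𝓟 ((↑) ⁻¹' Ioo dm dp)) (𝓝 ga))
    (hgb : Tendsto g (comap (↑) (𝓝 dp) ⊓ 𝓟 ((↑) ⁻¹' Ioo dm dp)) (𝓝 gb)) :
    ∫ x in (↑) ⁻¹' Ioo dm dp, F x = gb - ga :=
  have := comap_coe_nhds_left_inf_principal_neBot h
  have := comap_coe_nhds_right_inf_principal_neBot h
  integral_eq_sub_of_hasDerivAt_of_tendsto_of_ordConnected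
    (ordConnected_Ioo.preimage_mono coe_strictMono.monotone)
    (measurableSet_Ioo.preimage measurable_coe_real_ereal) inf_le_right inf_le_right
    (fun _ hx => (eventually_comap_coe_nhds_lt hx.1).filter_mono inf_le_left)
    (fun _ hx => (eventually_comap_coe_nhds_gt hx.2).filter_mono inf_le_left)
    hderiv hint hga hgb

end EReal

theorem hasDerivAt_mul_deriv_mul_exp_neg {A ψ h : ℝ → ℝ} {y : ℝ} (hA : DifferentiableAt ℝ A y)
    (hψ : DifferentiableAt ℝ ψ y) (hh' : DifferentiableAt ℝ (deriv h) y) :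
    HasDerivAt (fun y => A y * deriv h y * Real.exp (-ψ y))
      ((A y * deriv (deriv h) y + deriv A y * deriv h y - deriv ψ y * A y * deriv h y)
        * Real.exp (-ψ y)) y :=
  ((hA.hasDerivAt.fun_mul hh'.hasDerivAt).fun_mul hψ.hasDerivAt.fun_neg.exp).congr_deriv (by ring)

theorem hasDerivAt_log_add_one_mul_mul_deriv_mul_exp_neg {A ψ h : ℝ → ℝ} {y : ℝ}
    (hA : DifferentiableAt ℝ A y) (hψ : DifferentiableAt ℝ ψ y) (hh : DifferentiableAt ℝ h y)
    (hh' : DifferentiableAt ℝ (deriv h) y) (hy : h y ≠ 0) :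
    HasDerivAt (fun y => (Real.log (h y) + 1) * A y * deriv h y * Real.exp (-ψ y))
      ((Real.log (h y) + 1)
          * (A y * deriv (deriv h) y + deriv A y * deriv h y - deriv ψ y * A y * deriv h y)
          * Real.exp (-ψ y)
        + A y * deriv h y ^ 2 / h y * Real.exp (-ψ y)) y := by
  simp_rw [mul_assoc (Real.log _ + 1)]
  refine (((hh.hasDerivAt.log hy).add_const 1).fun_mul
    (hasDerivAt_mul_deriv_mul_exp_neg hA hψ hh')).congr_deriv ?_
  field_simp
  ring

theorem stmt9_general (dm dp : EReal) (hd : dm < dp)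
    (D : Set ℝ) (hDdef : D = {y : ℝ | dm < (y : EReal) ∧ (y : EReal) < dp})
    (A ψ h : ℝ → ℝ) (Z : ℝ)
    (hA : ContDiffOn ℝ 1 A D)
    (hψ : ContDiffOn ℝ 1 ψ D)
    (hh_pos : ∀ y ∈ D, 0 < h y) (hh : ContDiffOn ℝ 2 h D)
    (Lstar : (ℝ → ℝ) → ℝ → ℝ)
    (hL : ∀ u : ℝ → ℝ, ∀ y : ℝ, Lstar u y
      = A y * deriv (deriv u) y + deriv A y * deriv u y - deriv ψ y * A y * deriv u y)
    (hbm : Filter.Tendsto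
      (fun y => (Real.log (h y) + 1) * A y * deriv h y * Real.exp (-ψ y))
      (Filter.comap (fun x : ℝ => (x : EReal)) (nhds dm) ⊓ Filter.principal D) (nhds 0))
    (hbp : Filter.Tendsto
      (fun y => (Real.log (h y) + 1) * A y * deriv h y * Real.exp (-ψ y))
      (Filter.comap (fun x : ℝ => (x : EReal)) (nhds dp) ⊓ Filter.principal D) (nhds 0))
    (hint1 : IntegrableOn (fun y => (Real.log (h y) + 1) * Lstar h y * Real.exp (-ψ y)) D)
    (hint2 : IntegrableOn (fun y => A y * (deriv h y)^2 / h y * Real.exp (-ψ y)) D) :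
    ∫ y in D, (Real.log (h y) + 1) * Lstar h y * (Real.exp (-ψ y) / Z)
      = - ∫ y in D, A y * (deriv h y)^2 / h y * (Real.exp (-ψ y) / Z) := by
  obtain rfl : D = ((↑) : ℝ → EReal) ⁻¹' Ioo dm dp := hDdef
  have hD : IsOpen ((↑) ⁻¹' Ioo dm dp : Set ℝ) :=
    isOpen_Ioo.preimage continuous_coe_real_ereal
  have hh' := hh.deriv_of_isOpen (m := 1) hD (by norm_num)
  have hderiv : ∀ y ∈ ((↑) ⁻¹' Ioo dm dp : Set ℝ),
      HasDerivAt (fun y => (Real.log (h y) + 1) * A y * deriv h y * Real.exp (-ψ y))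
        ((Real.log (h y) + 1) * Lstar h y * Real.exp (-ψ y)
          + A y * deriv h y ^ 2 / h y * Real.exp (-ψ y)) y := fun y hy => by
    have hnhds := hD.mem_nhds hy
    rw [hL]
    exact hasDerivAt_log_add_one_mul_mul_deriv_mul_exp_neg
      ((hA.contDiffAt hnhds).differentiableAt one_ne_zero)
      ((hψ.contDiffAt hnhds).differentiableAt one_ne_zero)
      ((hh.contDiffAt hnhds).differentiableAt two_ne_zero)
      ((hh'.contDiffAt hnhds).differentiableAt one_ne_zero) (hh_pos y hy).ne'
  have hsum := EReal.integral_preimage_Ioo_eq_sub_of_hasDerivAt_of_tendsto hd hderiv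
    (hint1.add hint2) hbm hbp
  rw [integral_add hint1 hint2, sub_self] at hsum
  simp_rw [← mul_div_assoc, integral_div]
  rw [eq_neg_of_add_eq_zero_left hsum, neg_div]

/-- **Entropy production (Fisher information) identity for `L*` under the Gibbs measure.**
With `(L*h) = Ah'' + A'h' − ψ'Ah'` and `μ_∞(dy) = (e^{−ψ(y)}/Z)dy`, vanishing boundary terms
and suitable integrability give `∫ (log h + 1) L*h dμ_∞ = −∫ A(h')²/h dμ_∞`. -/
theorem stmt9 (dm dp : EReal) (hd : dm < dp)
    (D : Set ℝ) (hDdef : D = {y : ℝ | dm < (y : EReal) ∧ (y : EReal) < dp})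
    (A ψ h : ℝ → ℝ) (Z : ℝ)
    (hA_pos : ∀ y ∈ D, 0 < A y) (hA : ContDiffOn ℝ 1 A D)
    (hψ : ContDiffOn ℝ 1 ψ D)
    (hZdef : Z = ∫ y in D, Real.exp (-ψ y))
    (hZint : IntegrableOn (fun y => Real.exp (-ψ y)) D)
    (hZpos : 0 < Z)
    (hh_pos : ∀ y ∈ D, 0 < h y) (hh : ContDiffOn ℝ 2 h D)
    (Lstar : (ℝ → ℝ) → ℝ → ℝ)
    (hL : ∀ u : ℝ → ℝ, ∀ y : ℝ, Lstar u y
      = A y * deriv (deriv u) y + deriv A y * deriv u y - deriv ψ y * A y * deriv u y)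
    (hbm : Filter.Tendsto
      (fun y => (Real.log (h y) + 1) * A y * deriv h y * Real.exp (-ψ y))
      (Filter.comap (fun x : ℝ => (x : EReal)) (nhds dm) ⊓ Filter.principal D) (nhds 0))
    (hbp : Filter.Tendsto
      (fun y => (Real.log (h y) + 1) * A y * deriv h y * Real.exp (-ψ y))
      (Filter.comap (fun x : ℝ => (x : EReal)) (nhds dp) ⊓ Filter.principal D) (nhds 0))
    (hint1 : IntegrableOn (fun y => (Real.log (h y) + 1) * Lstar h y * Real.exp (-ψ y)) D)
    (hint2 : IntegrableOn (fun y => A y * (deriv h y)^2 / h y * Real.exp (-ψ y)) D) :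
    ∫ y in D, (Real.log (h y) + 1) * Lstar h y * (Real.exp (-ψ y) / Z)
      = - ∫ y in D, A y * (deriv h y)^2 / h y * (Real.exp (-ψ y) / Z) :=
  stmt9_general dm dp hd D hDdef A ψ h Z hA hψ hh_pos hh Lstar hL hbm hbp hint1 hint2
end
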